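/- arXiv:2206.04183 — 3 statements merged into one kernel-verified Lean document; each statement's English description precedes it below -/
import Mathlib

section
/- Let 0 < ρ∞ < 1 and L < M. Define the mixed polynomials P(x) = ρ∞ P_{M/M}(x) + (1-ρ∞) P_{L/M}(x) and Q(x) = ρ∞ Q_{M/M}(x) + (1-ρ∞) Q_{L/M}(x). Then the limit as real ω → +∞ of |P(iω)/Q(iω)| equals ρ∞. -/
open Finset in
noncomputable def padeP (L M : ℕ) (x : ℂ) : ℂ :=
  ∑ i ∈ Finset.range (L + 1),
    ((Nat.factorial (M + L - i) : ℂ) / ((Nat.factorial i : ℂ) * (Nat.factorial (L - i) : ℂ))) * x ^ i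

open Finset in
noncomputable def padeQ (L M : ℕ) (x : ℂ) : ℂ :=
  ((Nat.factorial M : ℂ) / (Nat.factorial L : ℂ)) *
    ∑ i ∈ Finset.range (M + 1),
      ((Nat.factorial (M + L - i) : ℂ) / ((Nat.factorial i : ℂ) * (Nat.factorial (M - i) : ℂ))) * (-x) ^ i

open Filter Finset Complex

lemma iomega_ne {ω : ℝ} (hω : 0 < ω) : Complex.I * ω ≠ 0 :=
  mul_ne_zero Complex.I_ne_zero (by exact_mod_cast hω.ne')

lemma term_tendsto (c : ℂ) {i M : ℕ} (h : i ≤ M) :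
    Tendsto (fun ω : ℝ => c * (Complex.I * ω) ^ i / (Complex.I * ω) ^ M) atTop
      (nhds (if i = M then c else 0)) := by
  rcases eq_or_lt_of_le h with rfl | h
  · simp only [if_pos rfl]
    have : (fun ω : ℝ => c * (Complex.I * ω) ^ i / (Complex.I * ω) ^ i) =ᶠ[atTop]
        fun _ => c := by
      filter_upwards [eventually_gt_atTop 0] with ω hω
      rw [mul_div_assoc, div_self (pow_ne_zero _ (iomega_ne hω)), mul_one]
    exact Tendsto.congr' this.symm tendsto_const_nhds
  · rw [if_neg h.ne]
    rw [tendsto_zero_iff_norm_tendsto_zero]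
    have hev : (fun ω : ℝ => ‖c * (Complex.I * ω) ^ i / (Complex.I * ω) ^ M‖) =ᶠ[atTop]
        fun ω => ‖c‖ * (ω ^ i / ω ^ M) := by
      filter_upwards [eventually_gt_atTop 0] with ω hω
      have : ‖Complex.I * (ω : ℂ)‖ = ω := by
        rw [norm_mul, Complex.norm_I, one_mul,
          Complex.norm_real, Real.norm_of_nonneg hω.le]
      rw [norm_div, norm_mul, norm_pow, norm_pow, this, mul_div_assoc]
    rw [tendsto_congr' hev]
    have := (tendsto_pow_div_pow_atTop_zero (𝕜 := ℝ) h).const_mul ‖c‖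
    simpa using this

lemma sum_tendsto {M : ℕ} (n : ℕ) (hn : n ≤ M) (a : ℕ → ℂ) :
    Tendsto (fun ω : ℝ => (∑ i ∈ range (n + 1), a i * (Complex.I * ω) ^ i) / (Complex.I * ω) ^ M)
      atTop (nhds (∑ i ∈ range (n + 1), if i = M then a i else 0)) := by
  have heq : ∀ ω : ℝ,
      (∑ i ∈ range (n + 1), a i * (Complex.I * ω) ^ i) / (Complex.I * ω) ^ M =
        ∑ i ∈ range (n + 1), a i * (Complex.I * ω) ^ i / (Complex.I * ω) ^ M := fun ω =>
    Finset.sum_div _ _ _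
  simp only [heq]
  exact tendsto_finset_sum _ fun i hi =>
    term_tendsto (a i) (le_trans (Nat.lt_succ_iff.mp (mem_range.mp hi)) hn)

theorem mixed_pade_spectral_radius_limit (M L : ℕ) (hLM : L < M)
    (ρ : ℝ) (hρ0 : 0 < ρ) (hρ1 : ρ < 1) :
    Filter.Tendsto
      (fun ω : ℝ =>
        ‖((ρ * padeP M M (Complex.I * ω) + (1 - ρ) * padeP L M (Complex.I * ω)) /
            (ρ * padeQ M M (Complex.I * ω) + (1 - ρ) * padeQ L M (Complex.I * ω)))‖)
      Filter.atTop (nhds ρ) := by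
  set N : ℝ → ℂ := fun ω =>
    ρ * padeP M M (Complex.I * ω) + (1 - ρ) * padeP L M (Complex.I * ω) with hN
  set D : ℝ → ℂ := fun ω =>
    ρ * padeQ M M (Complex.I * ω) + (1 - ρ) * padeQ L M (Complex.I * ω) with hD
  have hMfac : (Nat.factorial M : ℂ) ≠ 0 := Nat.cast_ne_zero.mpr (Nat.factorial_ne_zero M)
  have hLfac : (Nat.factorial L : ℂ) ≠ 0 := Nat.cast_ne_zero.mpr (Nat.factorial_ne_zero L)
  -- limits of each piece divided by x^M
  have hPMM : Tendsto (fun ω : ℝ => padeP M M (Complex.I * ω) / (Complex.I * ω) ^ M) atTop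
      (nhds 1) := by
    have := sum_tendsto M le_rfl
      (fun i => ((Nat.factorial (M + M - i) : ℂ) /
        ((Nat.factorial i : ℂ) * (Nat.factorial (M - i) : ℂ))))
    simp only [padeP]
    convert this using 2
    rw [Finset.sum_ite_eq' (range (M + 1)) M]
    simp [Nat.factorial_ne_zero, hMfac]
  have hPLM : Tendsto (fun ω : ℝ => padeP L M (Complex.I * ω) / (Complex.I * ω) ^ M) atTop
      (nhds 0) := by
    have := sum_tendsto L hLM.le
      (fun i => ((Nat.factorial (M + L - i) : ℂ) /
        ((Nat.factorial i : ℂ) * (Nat.factorial (L - i) : ℂ))))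
    simp only [padeP]
    convert this using 2
    rw [eq_comm, Finset.sum_eq_zero]
    intro i hi
    have : i < M := by have := mem_range.mp hi; omega
    rw [if_neg this.ne]
  have hQgen : ∀ K : ℕ, K ≤ M →
      Tendsto (fun ω : ℝ => padeQ K M (Complex.I * ω) / (Complex.I * ω) ^ M) atTop
        (nhds ((-1) ^ M)) := by
    intro K hK
    have hKfac : (Nat.factorial K : ℂ) ≠ 0 := Nat.cast_ne_zero.mpr (Nat.factorial_ne_zero K)
    have hfun : ∀ ω : ℝ, padeQ K M (Complex.I * ω) =
        ∑ i ∈ range (M + 1),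
          (((Nat.factorial M : ℂ) / (Nat.factorial K : ℂ)) *
            ((Nat.factorial (M + K - i) : ℂ) /
              ((Nat.factorial i : ℂ) * (Nat.factorial (M - i) : ℂ))) * (-1) ^ i) *
            (Complex.I * ω) ^ i := by
      intro ω
      rw [padeQ, Finset.mul_sum]
      refine Finset.sum_congr rfl fun i _ => ?_
      rw [neg_pow]
      ring
    have := sum_tendsto M le_rfl
      (fun i => ((Nat.factorial M : ℂ) / (Nat.factorial K : ℂ)) *
        ((Nat.factorial (M + K - i) : ℂ) /
          ((Nat.factorial i : ℂ) * (Nat.factorial (M - i) : ℂ))) * (-1) ^ i)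
    simp only [hfun]
    convert this using 2
    rw [Finset.sum_ite_eq' (range (M + 1)) M]
    have hMK : M + K - M = K := by omega
    simp only [if_pos (mem_range.mpr (Nat.lt_succ_self M)), hMK, Nat.sub_self,
      Nat.factorial_zero, Nat.cast_one, mul_one]
    field_simp
  have hNlim : Tendsto (fun ω : ℝ => N ω / (Complex.I * ω) ^ M) atTop (nhds ρ) := by
    have : Tendsto (fun ω : ℝ =>
        (ρ : ℂ) * (padeP M M (Complex.I * ω) / (Complex.I * ω) ^ M) +
          (1 - ρ) * (padeP L M (Complex.I * ω) / (Complex.I * ω) ^ M)) atTop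
        (nhds ((ρ : ℂ) * 1 + (1 - ρ) * 0)) :=
      ((hPMM.const_mul _).add (hPLM.const_mul _))
    simp only [mul_one, mul_zero, add_zero] at this
    convert this using 2 with ω
    simp only [hN, add_div, mul_div_assoc]
  have hDlim : Tendsto (fun ω : ℝ => D ω / (Complex.I * ω) ^ M) atTop
      (nhds ((-1) ^ M)) := by
    have : Tendsto (fun ω : ℝ =>
        (ρ : ℂ) * (padeQ M M (Complex.I * ω) / (Complex.I * ω) ^ M) +
          (1 - ρ) * (padeQ L M (Complex.I * ω) / (Complex.I * ω) ^ M)) atTop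
        (nhds ((ρ : ℂ) * (-1) ^ M + (1 - ρ) * (-1) ^ M)) :=
      (((hQgen M le_rfl).const_mul _).add ((hQgen L hLM.le).const_mul _))
    have h2 : (ρ : ℂ) * (-1) ^ M + (1 - ρ) * (-1) ^ M = (-1) ^ M := by ring
    rw [h2] at this
    convert this using 2 with ω
    simp only [hD, add_div, mul_div_assoc]
  have hne : ((-1 : ℂ) ^ M) ≠ 0 := pow_ne_zero _ (by norm_num)
  have hratio : Tendsto (fun ω : ℝ => N ω / D ω) atTop (nhds ((ρ : ℂ) / (-1) ^ M)) := by
    have := hNlim.div hDlim hne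
    refine this.congr' ?_
    filter_upwards [eventually_gt_atTop 0] with ω hω
    exact div_div_div_cancel_right₀ (pow_ne_zero _ (iomega_ne hω)) _ _
  have habs : Tendsto (fun ω : ℝ => ‖N ω / D ω‖) atTop
      (nhds ‖(ρ : ℂ) / (-1) ^ M‖) :=
    (continuous_norm.tendsto _).comp hratio
  have : ‖(ρ : ℂ) / (-1) ^ M‖ = ρ := by
    rw [norm_div, norm_pow, Complex.norm_real, Real.norm_of_nonneg hρ0.le]
    simp
  rwa [this] at habs
end

section
/- Let A be a real square matrix, r a complex number with Im(r) ≠ 0, and suppose (rI − A) and (r̄I − A) are invertible. If y solves (rI − A)y = g for a real vector g, then the real vector x = −Im(y)/Im(r) solves (rI − A)(r̄I − A)x = g. -/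
/-!
Write `B = rI - A` and `C = r̄I - A`. Conjugating `B y = g` gives `C ȳ = g`, while
`C y = B y + (r̄ - r) y = g + (r̄ - r) y`. Subtracting, `C (ȳ - y) = (r - r̄) y`, so
`x = (ȳ - y) / (r - r̄) = -Im y / Im r` satisfies `C x = y` and hence `B C x = B y = g`.
-/

open Matrix ComplexConjugate

section ShiftedMatrix

variable {ι : Type*} [Fintype ι] [DecidableEq ι]

theorem smul_one_sub_mulVec_sub_eq {R : Type*} [CommRing R] (A : Matrix ι ι R) {r s : R}
    {g y z : ι → R} (hy : (r • 1 - A) *ᵥ y = g) (hz : (s • 1 - A) *ᵥ z = g) :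
    (s • 1 - A) *ᵥ (z - y) = (r - s) • y := by
  have hshift : s • 1 - A = (r • 1 - A) - (r - s) • (1 : Matrix ι ι R) := by module
  rw [mulVec_sub, hz, hshift, sub_mulVec, hy, smul_mulVec, one_mulVec, sub_sub_cancel]

theorem smul_one_sub_mulVec_inv_smul_sub {K : Type*} [Field K] (A : Matrix ι ι K) {r s : K}
    {g y z : ι → K} (hy : (r • 1 - A) *ᵥ y = g) (hz : (s • 1 - A) *ᵥ z = g) (hrs : r ≠ s) :
    (s • 1 - A) *ᵥ ((r - s)⁻¹ • (z - y)) = y := by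
  rw [mulVec_smul, smul_one_sub_mulVec_sub_eq A hy hz, inv_smul_smul₀ (sub_ne_zero.2 hrs)]

theorem conj_smul_one_sub_map_ofReal_mulVec (A : Matrix ι ι ℝ) {r : ℂ} {g : ι → ℝ}
    {y : ι → ℂ} (hy : (r • 1 - A.map Complex.ofReal) *ᵥ y = fun i => (g i : ℂ)) :
    (conj r • 1 - A.map Complex.ofReal) *ᵥ (conj ∘ y) = fun i => (g i : ℂ) := by
  have hmap : (r • 1 - A.map Complex.ofReal).map conj = conj r • 1 - A.map Complex.ofReal := by
    ext i j
    simp [Matrix.sub_apply, one_apply, apply_ite]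
  funext i
  rw [← hmap, ← RingHom.map_mulVec, hy, Complex.conj_ofReal]

end ShiftedMatrix

theorem Complex.conj_sub_div_sub_conj (z r : ℂ) :
    (conj z - z) / (r - conj r) = ((-z.im / r.im : ℝ) : ℂ) := by
  rw [← neg_sub, Complex.sub_conj, Complex.sub_conj]
  by_cases hr : r.im = 0
  · simp [hr]
  · have : (r.im : ℂ) ≠ 0 := by exact_mod_cast hr
    push_cast
    field_simp

theorem complex_pair_real_solution_general (n : ℕ) (A : Matrix (Fin n) (Fin n) ℝ)
    (r : ℂ) (hr : r.im ≠ 0)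
    (g : Fin n → ℝ) (y : Fin n → ℂ)
    (hy : (r • (1 : Matrix (Fin n) (Fin n) ℂ) - A.map Complex.ofReal) *ᵥ y =
      fun i => (g i : ℂ)) :
    ((r • (1 : Matrix (Fin n) (Fin n) ℂ) - A.map Complex.ofReal) *
        ((starRingEnd ℂ) r • (1 : Matrix (Fin n) (Fin n) ℂ) - A.map Complex.ofReal)) *ᵥ
      (fun i => ((-(y i).im / r.im : ℝ) : ℂ)) = fun i => (g i : ℂ) := by
  have hx : (fun i => ((-(y i).im / r.im : ℝ) : ℂ)) = (r - conj r)⁻¹ • (conj ∘ y - y) := by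
    funext i
    rw [← Complex.conj_sub_div_sub_conj, div_eq_inv_mul]
    rfl
  have hr_ne : r ≠ conj r := fun h => hr (Complex.conj_eq_iff_im.1 h.symm)
  rw [← mulVec_mulVec, hx, smul_one_sub_mulVec_inv_smul_sub _ hy
    (conj_smul_one_sub_map_ofReal_mulVec A hy) hr_ne, hy]

theorem complex_pair_real_solution (n : ℕ) (A : Matrix (Fin n) (Fin n) ℝ)
    (r : ℂ) (hr : r.im ≠ 0)
    (h1 : IsUnit (r • (1 : Matrix (Fin n) (Fin n) ℂ) - A.map Complex.ofReal).det)
    (h2 : IsUnit ((starRingEnd ℂ) r • (1 : Matrix (Fin n) (Fin n) ℂ) - A.map Complex.ofReal).det)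
    (g : Fin n → ℝ) (y : Fin n → ℂ)
    (hy : (r • (1 : Matrix (Fin n) (Fin n) ℂ) - A.map Complex.ofReal) *ᵥ y =
      fun i => (g i : ℂ)) :
    ((r • (1 : Matrix (Fin n) (Fin n) ℂ) - A.map Complex.ofReal) *
        ((starRingEnd ℂ) r • (1 : Matrix (Fin n) (Fin n) ℂ) - A.map Complex.ofReal)) *ᵥ
      (fun i => ((-(y i).im / r.im : ℝ) : ℂ)) = fun i => (g i : ℂ) :=
  complex_pair_real_solution_general n A r hr g y hy
end

section
/- For the mixed (1,2)/(2,2) scheme with weight ρ∞ ∈ [0,1], define P(z) = ρ∞(12 + 6z + z²) + (1−ρ∞)(6 + 2z) and Q(z) = ρ∞(12 − 6z + z²) + (1−ρ∞)(6 − 4z + z²). Then for all real x, |P(ix)| ≤ |Q(ix)|, i.e., the mixed scheme is unconditionally stable on the imaginary axis. -/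
open Complex

theorem mixed_scheme_unconditionally_stable (ρ : ℝ) (h0 : 0 ≤ ρ) (h1 : ρ ≤ 1) (x : ℝ) :
    ‖((ρ : ℂ) * (12 + 6 * (Complex.I * x) + (Complex.I * x) ^ 2) +
        (1 - (ρ : ℂ)) * (6 + 2 * (Complex.I * x)))‖ ≤
      ‖((ρ : ℂ) * (12 - 6 * (Complex.I * x) + (Complex.I * x) ^ 2) +
        (1 - (ρ : ℂ)) * (6 - 4 * (Complex.I * x) + (Complex.I * x) ^ 2))‖ := by
  rw [Complex.norm_def, Complex.norm_def]
  apply Real.sqrt_le_sqrt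
  simp only [Complex.normSq_apply, Complex.add_re, Complex.add_im, Complex.mul_re,
    Complex.mul_im, Complex.sub_re, Complex.sub_im, Complex.ofReal_re, Complex.ofReal_im,
    Complex.one_re, Complex.one_im, Complex.I_re, Complex.I_im, Complex.re_ofNat, Complex.im_ofNat, Complex.I_sq, mul_pow, Complex.ofReal_pow, Complex.neg_re, Complex.neg_im]
  ring_nf
  simp only [← Complex.ofReal_pow, Complex.ofReal_re, Complex.ofReal_im]
  ring_nf
  nlinarith [sq_nonneg x, sq_nonneg (x^2), mul_nonneg (mul_nonneg (sub_nonneg.2 h1) (by linarith : (0:ℝ) ≤ 1 + ρ)) (sq_nonneg (x^2))]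
end
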